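/- For all x, y ∈ M̄_n: h(y) ≤ h(x) if and only if there exist z, w ∈ M̄_n with y = z·x·w. Moreover, if 0 ≤ h(y) ≤ h(x) with x = (k,d,m) and y = (k',d',m'), then the nonzero elements z = (k', k−k', m') and w = (k+d, k'+d'−k−d, k+d+m'−k') belong to M̄_n and satisfy y = z·x·w. -/
import Mathlib


noncomputable section

/-- Elements of the monoid: `none` is the zero element, `some (k, d, m)` a triple. -/
abbrev El := Option (ℝ × ℝ × ℝ)

/-- Membership in `M̄_n`. -/
def inM (n : ℕ) : El → Prop
  | none => True
  | some (k, d, m) => 1 - min 0 d ≤ k ∧ k ≤ m ∧ m ≤ (n : ℝ) - max 0 d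

/-- The product on `M̄_n`. -/
def mul : El → El → El
  | some (k, d, m), some (k', d', m') =>
      if max k (k' - d) ≤ min m (m' - d) then
        some (max k (k' - d), d + d', min m (m' - d))
      else none
  | _, _ => none

/-- The transpose (semigroup inverse). -/
def transp : El → El
  | none => none
  | some (k, d, m) => some (k + d, -d, m + d)

/-- The height function. -/
def height : El → ℝ
  | none => -1
  | some (k, _, m) => m - k

/-- `pw x j` is the `(j+1)`-st power of `x` (so `pw x 0 = x`). -/
def pw (x : El) : ℕ → El
  | 0 => x
  | j + 1 => mul (pw x j) x


lemma inM_some_iff (n : ℕ) (k d m : ℝ) :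
    inM n (some (k, d, m)) ↔ 1 ≤ k ∧ 1 ≤ k + d ∧ k ≤ m ∧ m ≤ n ∧ m + d ≤ n := by
  unfold inM
  constructor
  · rintro ⟨h1, h2, h3⟩
    have hm : (1 : ℝ) - k ≤ min 0 d := by linarith
    have hM : max 0 d ≤ (n : ℝ) - m := by linarith
    rw [le_min_iff] at hm
    rw [max_le_iff] at hM
    exact ⟨by linarith [hm.1], by linarith [hm.2], h2, by linarith [hM.1], by linarith [hM.2]⟩
  · rintro ⟨h1, h2, h3, h4, h5⟩
    have hm : (1 : ℝ) - k ≤ min 0 d := le_min (by linarith) (by linarith)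
    have hM : max 0 d ≤ (n : ℝ) - m := max_le (by linarith) (by linarith)
    exact ⟨by linarith, h3, by linarith⟩

lemma height_mul (a b : El) :
    mul a b = none ∨ (0 ≤ height (mul a b) ∧ height (mul a b) ≤ height a ∧
      height (mul a b) ≤ height b) := by
  match a, b with
  | none, _ => left; rfl
  | some (k, d, m), none => left; rfl
  | some (k, d, m), some (k', d', m') =>
    simp only [mul]
    split_ifs with h
    · right
      simp only [height]
      have h1 := le_max_left k (k' - d)
      have h2 := le_max_right k (k' - d)
      have h3 := min_le_left m (m' - d)
      have h4 := min_le_right m (m' - d)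
      exact ⟨by linarith, by linarith, by linarith⟩
    · left; rfl

lemma mul_none_left (w : El) : mul none w = none := by
  cases w <;> rfl

lemma part2 (n : ℕ) (k d m k' d' m' : ℝ)
    (hx : inM n (some (k, d, m))) (hy : inM n (some (k', d', m')))
    (h0 : 0 ≤ height (some (k', d', m')))
    (hle : height (some (k', d', m')) ≤ height (some (k, d, m))) :
    inM n (some (k', k - k', m')) ∧
      inM n (some (k + d, k' + d' - k - d, k + d + m' - k')) ∧
      mul (mul (some (k', k - k', m')) (some (k, d, m)))
          (some (k + d, k' + d' - k - d, k + d + m' - k')) =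
        some (k', d', m') := by
  rw [inM_some_iff] at hx hy
  obtain ⟨hx1, hx2, hx3, hx4, hx5⟩ := hx
  obtain ⟨hy1, hy2, hy3, hy4, hy5⟩ := hy
  simp only [height] at h0 hle
  refine ⟨?_, ?_, ?_⟩
  · rw [inM_some_iff]
    exact ⟨hy1, by linarith, hy3, hy4, by linarith⟩
  · rw [inM_some_iff]
    exact ⟨by linarith, by linarith, by linarith, by linarith, by linarith⟩
  · have e1 : mul (some (k', k - k', m')) (some (k, d, m)) =
        some (k', k - k' + d, m') := by
      simp only [mul]
      rw [show k - (k - k') = k' from by ring, max_self,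
        min_eq_left (by linarith : m' ≤ m - (k - k')), if_pos (by linarith)]
    rw [e1]
    simp only [mul]
    rw [show k + d - (k - k' + d) = k' from by ring, max_self,
      show k + d + m' - k' - (k - k' + d) = m' from by ring, min_self,
      if_pos (by linarith)]
    simp only [Option.some.injEq, Prod.mk.injEq]
    exact ⟨trivial, by ring, trivial⟩

/-- h(y) ≤ h(x) iff y = z·x·w for some z, w ∈ M̄_n; moreover when
0 ≤ h(y) ≤ h(x), explicit nonzero z and w work. -/
theorem stmt14 (n : ℕ) (hn : 2 ≤ n) :
    (∀ x y : El, inM n x → inM n y →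
      (height y ≤ height x ↔
        ∃ z w : El, inM n z ∧ inM n w ∧ y = mul (mul z x) w)) ∧
    (∀ k d m k' d' m' : ℝ,
      inM n (some (k, d, m)) → inM n (some (k', d', m')) →
      0 ≤ height (some (k', d', m')) →
      height (some (k', d', m')) ≤ height (some (k, d, m)) →
      inM n (some (k', k - k', m')) ∧
      inM n (some (k + d, k' + d' - k - d, k + d + m' - k')) ∧
      mul (mul (some (k', k - k', m')) (some (k, d, m)))
          (some (k + d, k' + d' - k - d, k + d + m' - k')) =
        some (k', d', m')) := by
  constructor
  · intro x y hx hy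
    constructor
    · intro hle
      match x, y with
      | x, none =>
        exact ⟨none, none, trivial, trivial, by rw [mul_none_left, mul_none_left]⟩
      | none, some (k', d', m') =>
        exfalso
        rw [inM_some_iff] at hy
        simp only [height] at hle
        linarith [hy.2.2.1]
      | some (k, d, m), some (k', d', m') =>
        have h0 : 0 ≤ height (some (k', d', m')) := by
          rw [inM_some_iff] at hy
          simp only [height]
          linarith [hy.2.2.1]
        obtain ⟨hz, hw, he⟩ := part2 n k d m k' d' m' hx hy h0 hle
        exact ⟨_, _, hz, hw, he.symm⟩
    · rintro ⟨z, w, hz, hw, rfl⟩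
      have hxh : -1 ≤ height x := by
        match x with
        | none => simp [height]
        | some (k, d, m) =>
          rw [inM_some_iff] at hx
          simp only [height]
          linarith [hx.2.2.1]
      rcases height_mul z x with h | ⟨h0, h1, h2⟩
      · rw [h, mul_none_left]
        simpa [height] using hxh
      · rcases height_mul (mul z x) w with h' | ⟨_, h1', _⟩
        · rw [h']
          simpa [height] using hxh
        · linarith
  · intro k d m k' d' m' hx hy h0 hle
    exact part2 n k d m k' d' m' hx hy h0 hle
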